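/- Algebraic identity for the quasi-geostrophic nonlinearity: if v⁰ = ∇^⊥ Δ₃⁻¹ q and ρ⁰ = −∂_z Δ₃⁻¹ q for a smooth zero-mean periodic q, then ∇^⊥·(v⁰·∇ v⁰) − ∂_z(v⁰·∇ ρ⁰) = v⁰·∇ q. -/

import Mathlib

noncomputable section

def px (f : ℝ × ℝ × ℝ → ℝ) : ℝ × ℝ × ℝ → ℝ := fun p => fderiv ℝ f p (1, 0, 0)
def py (f : ℝ × ℝ × ℝ → ℝ) : ℝ × ℝ × ℝ → ℝ := fun p => fderiv ℝ f p (0, 1, 0)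
def pz (f : ℝ × ℝ × ℝ → ℝ) : ℝ × ℝ × ℝ → ℝ := fun p => fderiv ℝ f p (0, 0, 1)

namespace QGAux

variable {f g : ℝ × ℝ × ℝ → ℝ}

lemma contDiff_apply (hf : ContDiff ℝ (⊤ : ℕ∞) f) (v : ℝ × ℝ × ℝ) :
    ContDiff ℝ (⊤ : ℕ∞) (fun p => fderiv ℝ f p v) :=
  (hf.fderiv_right (by simp)).clm_apply contDiff_const

lemma contDiff_px (hf : ContDiff ℝ (⊤ : ℕ∞) f) : ContDiff ℝ (⊤ : ℕ∞) (px f) := contDiff_apply hf _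
lemma contDiff_py (hf : ContDiff ℝ (⊤ : ℕ∞) f) : ContDiff ℝ (⊤ : ℕ∞) (py f) := contDiff_apply hf _
lemma contDiff_pz (hf : ContDiff ℝ (⊤ : ℕ∞) f) : ContDiff ℝ (⊤ : ℕ∞) (pz f) := contDiff_apply hf _

lemma Dmul (hf : ContDiff ℝ (⊤ : ℕ∞) f) (hg : ContDiff ℝ (⊤ : ℕ∞) g) (v : ℝ × ℝ × ℝ) (x : ℝ × ℝ × ℝ) :
    fderiv ℝ (fun y => f y * g y) x v = fderiv ℝ f x v * g x + f x * fderiv ℝ g x v := by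
  rw [fderiv_fun_mul (hf.differentiable (by simp)).differentiableAt
    (hg.differentiable (by simp)).differentiableAt]
  simp [mul_comm]
  ring

lemma Dadd (hf : ContDiff ℝ (⊤ : ℕ∞) f) (hg : ContDiff ℝ (⊤ : ℕ∞) g) (v : ℝ × ℝ × ℝ) (x : ℝ × ℝ × ℝ) :
    fderiv ℝ (fun y => f y + g y) x v = fderiv ℝ f x v + fderiv ℝ g x v := by
  rw [fderiv_fun_add (hf.differentiable (by simp)).differentiableAt
    (hg.differentiable (by simp)).differentiableAt]
  simp

lemma Dneg (v : ℝ × ℝ × ℝ) (x : ℝ × ℝ × ℝ) :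
    fderiv ℝ (fun y => -(f y)) x v = -(fderiv ℝ f x v) := by
  rw [fderiv_fun_neg]; simp

lemma Dswap (hf : ContDiff ℝ (⊤ : ℕ∞) f) (v w : ℝ × ℝ × ℝ) (x : ℝ × ℝ × ℝ) :
    fderiv ℝ (fun p => fderiv ℝ f p w) x v = fderiv ℝ (fun p => fderiv ℝ f p v) x w := by
  have hd : DifferentiableAt ℝ (fderiv ℝ f) x :=
    ((hf.fderiv_right (m := (⊤ : ℕ∞)) (by simp)).differentiable (by simp)).differentiableAt
  have key : ∀ u : ℝ × ℝ × ℝ, fderiv ℝ (fun p => fderiv ℝ f p u) x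
      = (fderiv ℝ (fderiv ℝ f) x).flip u := by
    intro u
    have := fderiv_clm_apply (c := fderiv ℝ f) (u := fun _ => u) hd (differentiableAt_const u)
    simpa using this
  have hsymm : IsSymmSndFDerivAt ℝ f x := (hf.contDiffAt).isSymmSndFDerivAt (by simp; exact WithTop.coe_le_coe.mpr le_top)
  rw [key w, key v]
  simpa using (hsymm w v).symm

/- product / sum / neg rules as function-level equalities -/

lemma px_mul (hf : ContDiff ℝ (⊤ : ℕ∞) f) (hg : ContDiff ℝ (⊤ : ℕ∞) g) :
    px (fun y => f y * g y) = fun x => px f x * g x + f x * px g x :=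
  funext fun x => Dmul hf hg _ x
lemma py_mul (hf : ContDiff ℝ (⊤ : ℕ∞) f) (hg : ContDiff ℝ (⊤ : ℕ∞) g) :
    py (fun y => f y * g y) = fun x => py f x * g x + f x * py g x :=
  funext fun x => Dmul hf hg _ x
lemma pz_mul (hf : ContDiff ℝ (⊤ : ℕ∞) f) (hg : ContDiff ℝ (⊤ : ℕ∞) g) :
    pz (fun y => f y * g y) = fun x => pz f x * g x + f x * pz g x :=
  funext fun x => Dmul hf hg _ x

lemma px_add (hf : ContDiff ℝ (⊤ : ℕ∞) f) (hg : ContDiff ℝ (⊤ : ℕ∞) g) :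
    px (fun y => f y + g y) = fun x => px f x + px g x :=
  funext fun x => Dadd hf hg _ x
lemma py_add (hf : ContDiff ℝ (⊤ : ℕ∞) f) (hg : ContDiff ℝ (⊤ : ℕ∞) g) :
    py (fun y => f y + g y) = fun x => py f x + py g x :=
  funext fun x => Dadd hf hg _ x
lemma pz_add (hf : ContDiff ℝ (⊤ : ℕ∞) f) (hg : ContDiff ℝ (⊤ : ℕ∞) g) :
    pz (fun y => f y + g y) = fun x => pz f x + pz g x :=
  funext fun x => Dadd hf hg _ x

lemma Dsub (hf : ContDiff ℝ (⊤ : ℕ∞) f) (hg : ContDiff ℝ (⊤ : ℕ∞) g) (v : ℝ × ℝ × ℝ) (x : ℝ × ℝ × ℝ) :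
    fderiv ℝ (fun y => f y - g y) x v = fderiv ℝ f x v - fderiv ℝ g x v := by
  rw [show (fun y => f y - g y) = fun y => f y + -(g y) from funext fun y => by ring,
    Dadd hf hg.neg, Dneg]
  ring

lemma px_sub (hf : ContDiff ℝ (⊤ : ℕ∞) f) (hg : ContDiff ℝ (⊤ : ℕ∞) g) :
    px (fun y => f y - g y) = fun x => px f x - px g x :=
  funext fun x => Dsub hf hg _ x
lemma py_sub (hf : ContDiff ℝ (⊤ : ℕ∞) f) (hg : ContDiff ℝ (⊤ : ℕ∞) g) :
    py (fun y => f y - g y) = fun x => py f x - py g x :=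
  funext fun x => Dsub hf hg _ x
lemma pz_sub (hf : ContDiff ℝ (⊤ : ℕ∞) f) (hg : ContDiff ℝ (⊤ : ℕ∞) g) :
    pz (fun y => f y - g y) = fun x => pz f x - pz g x :=
  funext fun x => Dsub hf hg _ x

lemma px_neg : px (fun y => -(f y)) = fun x => -(px f x) := funext fun x => Dneg _ x
lemma py_neg : py (fun y => -(f y)) = fun x => -(py f x) := funext fun x => Dneg _ x
lemma pz_neg : pz (fun y => -(f y)) = fun x => -(pz f x) := funext fun x => Dneg _ x

/- commutation, normal form: px outside py outside pz -/

lemma py_px (hf : ContDiff ℝ (⊤ : ℕ∞) f) : py (px f) = px (py f) :=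
  funext fun x => Dswap hf _ _ x
lemma pz_px (hf : ContDiff ℝ (⊤ : ℕ∞) f) : pz (px f) = px (pz f) :=
  funext fun x => Dswap hf _ _ x
lemma pz_py (hf : ContDiff ℝ (⊤ : ℕ∞) f) : pz (py f) = py (pz f) :=
  funext fun x => Dswap hf _ _ x

end QGAux

open QGAux

/-- Quasi-geostrophic nonlinearity identity: if `v⁰ = ∇^⊥ Δ₃⁻¹ q` and
`ρ⁰ = −∂_z Δ₃⁻¹ q` (expressed via a stream function `ψ` with `Δ₃ψ = q`), then
`∇^⊥·(v⁰·∇v⁰) − ∂_z(v⁰·∇ρ⁰) = v⁰·∇q`. -/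
theorem qg_nonlinearity_identity (ψ q v₁ v₂ ρ : ℝ × ℝ × ℝ → ℝ)
    (hψ : ContDiff ℝ (⊤ : ℕ∞) ψ)
    (hq : ∀ x, px (px ψ) x + py (py ψ) x + pz (pz ψ) x = q x)
    (hv₁ : v₁ = fun x => -(py ψ x)) (hv₂ : v₂ = px ψ)
    (hρ : ρ = fun x => -(pz ψ x)) :
    ∀ x,
      -(py (fun y => v₁ y * px v₁ y + v₂ y * py v₁ y) x)
        + px (fun y => v₁ y * px v₂ y + v₂ y * py v₂ y) x
        - pz (fun y => v₁ y * px ρ y + v₂ y * py ρ y) x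
      = v₁ x * px q x + v₂ x * py q x := by
  have hq' : q = fun x => px (px ψ) x + py (py ψ) x + pz (pz ψ) x :=
    funext fun x => (hq x).symm
  subst hv₁ hv₂ hρ hq'
  intro x
  simp (config := { maxDischargeDepth := 9 }) only [px_mul, py_mul, pz_mul,
    px_add, py_add, pz_add, px_sub, py_sub, pz_sub, px_neg, py_neg, pz_neg,
    py_px, pz_px, pz_py, hψ, contDiff_px, contDiff_py, contDiff_pz,
    ContDiff.mul, ContDiff.neg, ContDiff.add, ContDiff.sub]
  ring
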